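/- The class of finite H₄-free 3-hypertournaments does not have bounded obstacles to completion: there are arbitrarily large holey 3-hypertournaments B that have no H₄-free completion, yet every proper induced substructure of B has an H₄-free completion. -/
import Mathlib

/-- The 3-hypertournament H₄ on 4 points (automorphism group Alt(4)); with respect to
the natural order of Fin 4 its hyperedges are {0,1,2} and {0,2,3}. -/
def H4rel : Fin 4 → Fin 4 → Fin 4 → Prop := fun x y z =>
  (x,y,z) = ((0,1,2) : Fin 4 × Fin 4 × Fin 4) ∨ (x,y,z) = ((1,2,0) : Fin 4 × Fin 4 × Fin 4) ∨
  (x,y,z) = ((2,0,1) : Fin 4 × Fin 4 × Fin 4) ∨ (x,y,z) = ((0,3,1) : Fin 4 × Fin 4 × Fin 4) ∨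
  (x,y,z) = ((3,1,0) : Fin 4 × Fin 4 × Fin 4) ∨ (x,y,z) = ((1,0,3) : Fin 4 × Fin 4 × Fin 4) ∨
  (x,y,z) = ((0,2,3) : Fin 4 × Fin 4 × Fin 4) ∨ (x,y,z) = ((2,3,0) : Fin 4 × Fin 4 × Fin 4) ∨
  (x,y,z) = ((3,0,2) : Fin 4 × Fin 4 × Fin 4) ∨ (x,y,z) = ((1,3,2) : Fin 4 × Fin 4 × Fin 4) ∨
  (x,y,z) = ((3,2,1) : Fin 4 × Fin 4 × Fin 4) ∨ (x,y,z) = ((2,1,3) : Fin 4 × Fin 4 × Fin 4)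

/-- R contains no induced copy of H₄. -/
def H4FreeOn {A : Type*} (R : A → A → A → Prop) : Prop :=
  ¬ ∃ f : Fin 4 → A, Function.Injective f ∧ ∀ x y z, H4rel x y z ↔ R (f x) (f y) (f z)

/-- A 3-hypertournament on the set S of vertices. -/
def IsHyper3On (S : Set ℕ) (R : ℕ → ℕ → ℕ → Prop) : Prop :=
  (∀ a b c, R a b c → a ∈ S ∧ b ∈ S ∧ c ∈ S ∧ a ≠ b ∧ b ≠ c ∧ a ≠ c) ∧
  (∀ a b c, R a b c → R b c a) ∧
  (∀ a b c, a ∈ S → b ∈ S → c ∈ S → a ≠ b → b ≠ c → a ≠ c → (R a b c ↔ ¬ R a c b))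

/-- A holey 3-hypertournament on the vertex set S: each 3-subset of S carries at most
one cyclic orientation (closed under rotation), or is a hole. -/
def IsHoleyOn (S : Set ℕ) (R : ℕ → ℕ → ℕ → Prop) : Prop :=
  (∀ a b c, R a b c → a ∈ S ∧ b ∈ S ∧ c ∈ S ∧ a ≠ b ∧ b ≠ c ∧ a ≠ c) ∧
  (∀ a b c, R a b c → R b c a) ∧
  (∀ a b c, R a b c → ¬ R a c b)

/-! ### Auxiliary infrastructure -/

instance H4relDec : ∀ x y z : Fin 4, Decidable (H4rel x y z) := fun x y z => by
  unfold H4rel; infer_instance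

/-- cyclic orientation pattern of an increasing triple -/
def Cyc (a b c : ℕ) : Prop := (a < b ∧ b < c) ∨ (b < c ∧ c < a) ∨ (c < a ∧ a < b)

def lo3 (a b c : ℕ) : ℕ := min a (min b c)
def hi3 (a b c : ℕ) : ℕ := max a (max b c)
def md3 (a b c : ℕ) : ℕ := max (min a b) (min (max a b) c)

lemma sort_rot (a b c : ℕ) :
    lo3 b c a = lo3 a b c ∧ md3 b c a = md3 a b c ∧ hi3 b c a = hi3 a b c := by
  unfold lo3 md3 hi3; omega

lemma sort_swap (a b c : ℕ) :
    lo3 a c b = lo3 a b c ∧ md3 a c b = md3 a b c ∧ hi3 a c b = hi3 a b c := by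
  unfold lo3 md3 hi3; omega

lemma Cyc_rot {a b c : ℕ} (h : Cyc a b c) : Cyc b c a := by unfold Cyc at *; omega

/-- extend a sign function on sorted triples to an orientation relation -/
def mkRel (S : Set ℕ) (G : ℕ → ℕ → ℕ → Prop) : ℕ → ℕ → ℕ → Prop :=
  fun a b c => a ∈ S ∧ b ∈ S ∧ c ∈ S ∧ a ≠ b ∧ b ≠ c ∧ a ≠ c ∧
    (Cyc a b c ↔ G (lo3 a b c) (md3 a b c) (hi3 a b c))

lemma mkRel_hyper (S : Set ℕ) (G : ℕ → ℕ → ℕ → Prop) : IsHyper3On S (mkRel S G) := by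
  refine ⟨fun a b c h => ⟨h.1, h.2.1, h.2.2.1, h.2.2.2.1, h.2.2.2.2.1, h.2.2.2.2.2.1⟩, ?_, ?_⟩
  · rintro a b c ⟨ha, hb, hc, h1, h2, h3, hiff⟩
    refine ⟨hb, hc, ha, h2, Ne.symm h3, Ne.symm h1, ?_⟩
    rw [(sort_rot a b c).1, (sort_rot a b c).2.1, (sort_rot a b c).2.2]
    constructor
    · intro h; exact hiff.mp (Cyc_rot (Cyc_rot h))
    · intro h; exact Cyc_rot (hiff.mpr h)
  · intro a b c ha hb hc h1 h2 h3
    have hs := sort_swap a b c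
    constructor
    · rintro ⟨-, -, -, -, -, -, hiff⟩ ⟨-, -, -, -, -, -, hiff'⟩
      rw [hs.1, hs.2.1, hs.2.2] at hiff'
      have hPQ : Cyc a b c ↔ Cyc a c b := hiff.trans hiff'.symm
      unfold Cyc at hPQ
      omega
    · intro hneg
      by_cases hP : Cyc a b c
      · by_cases hg : G (lo3 a b c) (md3 a b c) (hi3 a b c)
        · exact ⟨ha, hb, hc, h1, h2, h3, iff_of_true hP hg⟩
        · exact absurd ⟨ha, hc, hb, h3, Ne.symm h2, h1,
            iff_of_false (by unfold Cyc at hP ⊢; omega)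
              (by rw [hs.1, hs.2.1, hs.2.2]; exact hg)⟩ hneg
      · by_cases hg : G (lo3 a b c) (md3 a b c) (hi3 a b c)
        · exact absurd ⟨ha, hc, hb, h3, Ne.symm h2, h1,
            iff_of_true (by unfold Cyc at hP ⊢; omega)
              (by rw [hs.1, hs.2.1, hs.2.2]; exact hg)⟩ hneg
        · exact ⟨ha, hb, hc, h1, h2, h3, iff_of_false hP hg⟩

lemma mkRel_sorted {S : Set ℕ} {G : ℕ → ℕ → ℕ → Prop} {p q r : ℕ}
    (h1 : p < q) (h2 : q < r) (hp : p ∈ S) (hq : q ∈ S) (hr : r ∈ S) :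
    mkRel S G p q r ↔ G p q r := by
  have e : lo3 p q r = p ∧ md3 p q r = q ∧ hi3 p q r = r := by unfold lo3 md3 hi3; omega
  unfold mkRel
  rw [e.1, e.2.1, e.2.2]
  have hc : Cyc p q r := Or.inl ⟨h1, h2⟩
  constructor
  · rintro ⟨-, -, -, -, -, -, hiff⟩; exact hiff.mp hc
  · intro h
    exact ⟨hp, hq, hr, by omega, by omega, by omega, iff_of_true hc h⟩

lemma iff_not_contra {A B : Prop} (h : A ↔ ¬ B) (h' : A ↔ B) : False := by tauto

/-! ### From an alternating 4-set to an induced copy of H₄ -/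

lemma embed_of_signs {S : Set ℕ} {R' : ℕ → ℕ → ℕ → Prop} (h3 : IsHyper3On S R')
    {a b c d : ℕ} (ha : a ∈ S) (hb : b ∈ S) (hc : c ∈ S) (hd : d ∈ S)
    (dab : a ≠ b) (dac : a ≠ c) (dad : a ≠ d) (dbc : b ≠ c) (dbd : b ≠ d) (dcd : c ≠ d)
    (s1 : R' a b c) (s2 : R' a d b) (s3 : R' a c d) (s4 : R' b d c) :
    ∃ f : Fin 4 → ℕ, Function.Injective f ∧ ∀ x y z, H4rel x y z ↔ R' (f x) (f y) (f z) := by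
  obtain ⟨ax1, ax2, ax3⟩ := h3
  have A2 : R' b c a := ax2 _ _ _ s1
  have A3 : R' c a b := ax2 _ _ _ A2
  have B2 : R' d b a := ax2 _ _ _ s2
  have B3 : R' b a d := ax2 _ _ _ B2
  have C2 : R' c d a := ax2 _ _ _ s3
  have C3 : R' d a c := ax2 _ _ _ C2
  have D2 : R' d c b := ax2 _ _ _ s4
  have D3 : R' c b d := ax2 _ _ _ D2
  have nA1 : ¬ R' a c b := (ax3 a b c ha hb hc (by omega) (by omega) (by omega)).mp s1
  have nA2 : ¬ R' b a c := (ax3 b c a hb hc ha (by omega) (by omega) (by omega)).mp A2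
  have nA3 : ¬ R' c b a := (ax3 c a b hc ha hb (by omega) (by omega) (by omega)).mp A3
  have nB1 : ¬ R' a b d := (ax3 a d b ha hd hb (by omega) (by omega) (by omega)).mp s2
  have nB2 : ¬ R' d a b := (ax3 d b a hd hb ha (by omega) (by omega) (by omega)).mp B2
  have nB3 : ¬ R' b d a := (ax3 b a d hb ha hd (by omega) (by omega) (by omega)).mp B3
  have nC1 : ¬ R' a d c := (ax3 a c d ha hc hd (by omega) (by omega) (by omega)).mp s3
  have nC2 : ¬ R' c a d := (ax3 c d a hc hd ha (by omega) (by omega) (by omega)).mp C2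
  have nC3 : ¬ R' d c a := (ax3 d a c hd ha hc (by omega) (by omega) (by omega)).mp C3
  have nD1 : ¬ R' b c d := (ax3 b d c hb hd hc (by omega) (by omega) (by omega)).mp s4
  have nD2 : ¬ R' d b c := (ax3 d c b hd hc hb (by omega) (by omega) (by omega)).mp D2
  have nD3 : ¬ R' c d b := (ax3 c b d hc hb hd (by omega) (by omega) (by omega)).mp D3
  refine ⟨![a, b, c, d], ?_, ?_⟩
  · intro i j hij
    fin_cases i <;> fin_cases j <;>
      first
      | rfl
      | (exfalso; revert hij; simp only [Matrix.cons_val_zero, Matrix.cons_val_one,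
          Matrix.head_cons, Matrix.cons_val_two, Matrix.tail_cons, Matrix.cons_val_three,
          Fin.isValue]; simp; omega)
  · intro x y z
    fin_cases x <;> fin_cases y <;> fin_cases z <;>
      simp only [Matrix.cons_val_zero, Matrix.cons_val_one, Matrix.head_cons,
        Matrix.cons_val_two, Matrix.tail_cons, Matrix.cons_val_three, Fin.isValue] <;>
      first
      | exact iff_of_true (by decide) (by assumption)
      | exact iff_of_false (by decide) (by assumption)
      | exact iff_of_false (by decide) (fun hh => by
          obtain ⟨-, -, -, d1, d2, d3⟩ := ax1 _ _ _ hh; omega)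

lemma quad_not_alt {S : Set ℕ} {R' : ℕ → ℕ → ℕ → Prop} (h3 : IsHyper3On S R')
    (hfree : H4FreeOn R') {p q r s : ℕ}
    (hp : p ∈ S) (hq : q ∈ S) (hr : r ∈ S) (hs : s ∈ S)
    (o1 : p < q) (o2 : q < r) (o3 : r < s) :
    ¬((R' p q r ↔ ¬ R' p q s) ∧ (R' p q s ↔ ¬ R' p r s) ∧ (R' p r s ↔ ¬ R' q r s)) := by
  rintro ⟨c1, c2, c3⟩
  have ax3 := h3.2.2
  by_cases b1 : R' p q r
  · have b2 : ¬ R' p q s := c1.mp b1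
    have b3 : R' p r s := by by_contra hh; exact b2 (c2.mpr hh)
    have b4 : ¬ R' q r s := c3.mp b3
    have f2 : R' p s q := (ax3 p s q hp hs hq (by omega) (by omega) (by omega)).mpr b2
    have f4 : R' q s r := (ax3 q s r hq hs hr (by omega) (by omega) (by omega)).mpr b4
    exact hfree (embed_of_signs h3 hp hq hr hs (by omega) (by omega) (by omega) (by omega)
      (by omega) (by omega) b1 f2 b3 f4)
  · have b2 : R' p q s := by by_contra hh; exact b1 (c1.mpr hh)
    have b3 : ¬ R' p r s := c2.mp b2
    have b4 : R' q r s := by by_contra hh; exact b3 (c3.mpr hh)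
    have f1 : R' p r q := (ax3 p r q hp hr hq (by omega) (by omega) (by omega)).mpr b1
    have f3 : R' p s r := (ax3 p s r hp hs hr (by omega) (by omega) (by omega)).mpr b3
    exact hfree (embed_of_signs h3 hp hq hs hr (by omega) (by omega) (by omega) (by omega)
      (by omega) (by omega) b2 f1 f3 b4)

/-! ### H₄-freeness of relations induced by alternation-free sign functions -/

def AltFreeOn (S : Set ℕ) (G : ℕ → ℕ → ℕ → Prop) : Prop :=
  ∀ p q r s : ℕ, p ∈ S → q ∈ S → r ∈ S → s ∈ S → p < q → q < r → r < s →
    ¬((G p q r ↔ ¬ G p q s) ∧ (G p q s ↔ ¬ G p r s) ∧ (G p r s ↔ ¬ G q r s))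

lemma H4Free_of_altFree (S : Set ℕ) (G : ℕ → ℕ → ℕ → Prop) (h : AltFreeOn S G) :
    H4FreeOn (mkRel S G) := by
  rintro ⟨f, hinj, hf⟩
  set π := Tuple.sort f with hπ
  have hsm : StrictMono (f ∘ π) :=
    (Tuple.monotone_sort f).strictMono_of_injective (hinj.comp (Equiv.injective π))
  have h012 : mkRel S G (f 0) (f 1) (f 2) := (hf 0 1 2).mp (by decide)
  have h023 : mkRel S G (f 0) (f 2) (f 3) := (hf 0 2 3).mp (by decide)
  have hmem : ∀ i : Fin 4, f i ∈ S := by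
    intro i; fin_cases i
    exacts [h012.1, h012.2.1, h012.2.2.1, h023.2.2.1]
  have key : ∀ i j k : Fin 4, i < j → j < k →
      (G (f (π i)) (f (π j)) (f (π k)) ↔ H4rel (π i) (π j) (π k)) := by
    intro i j k hij hjk
    have h1 : f (π i) < f (π j) := hsm hij
    have h2 : f (π j) < f (π k) := hsm hjk
    rw [← mkRel_sorted (S := S) (G := G) h1 h2 (hmem _) (hmem _) (hmem _)]
    exact (hf (π i) (π j) (π k)).symm
  have alt : ∀ σ : Equiv.Perm (Fin 4),
      (H4rel (σ 0) (σ 1) (σ 2) ↔ ¬ H4rel (σ 0) (σ 1) (σ 3)) ∧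
      (H4rel (σ 0) (σ 1) (σ 3) ↔ ¬ H4rel (σ 0) (σ 2) (σ 3)) ∧
      (H4rel (σ 0) (σ 2) (σ 3) ↔ ¬ H4rel (σ 1) (σ 2) (σ 3)) := by decide
  exact h (f (π 0)) (f (π 1)) (f (π 2)) (f (π 3))
    (hmem _) (hmem _) (hmem _) (hmem _)
    (hsm (by decide)) (hsm (by decide)) (hsm (by decide))
    ⟨by rw [key 0 1 2 (by decide) (by decide), key 0 1 3 (by decide) (by decide)]; exact (alt π).1,
     by rw [key 0 1 3 (by decide) (by decide), key 0 2 3 (by decide) (by decide)]; exact (alt π).2.1,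
     by rw [key 0 2 3 (by decide) (by decide), key 1 2 3 (by decide) (by decide)]; exact (alt π).2.2⟩

/-! ### The witness structure: two forcing chains glued along {1,2,3} -/

/-- triples prescribed positive orientation -/
def SpecT (n p q r : ℕ) : Prop :=
  (1 ≤ p ∧ q = p+1 ∧ r = p+3 ∧ r ≤ n) ∨ (p+2 = n ∧ q+1 = n ∧ r = n) ∨
  (p = 1 ∧ q = 3 ∧ r = n+1) ∨ (p = 2 ∧ q = n+1 ∧ r = n+2) ∨ (p = 3 ∧ q = n+2 ∧ r = n+3) ∨
  (n+1 ≤ p ∧ q = p+2 ∧ r = p+3 ∧ r+3 ≤ 2*n)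

/-- triples prescribed negative orientation -/
def SpecF (n p q r : ℕ) : Prop :=
  (1 ≤ p ∧ q = p+2 ∧ r = p+3 ∧ r ≤ n) ∨
  (p = 1 ∧ q = 2 ∧ r = n+1) ∨ (p = 2 ∧ q = 3 ∧ r = n+2) ∨ (p = 3 ∧ q = n+1 ∧ r = n+3) ∨
  (n+1 ≤ p ∧ q = p+1 ∧ r = p+3 ∧ r+3 ≤ 2*n) ∨ (p+5 = 2*n ∧ q+4 = 2*n ∧ r+3 = 2*n)

/-- the holey 3-hypertournament Bₙ -/
def RelB (n : ℕ) : ℕ → ℕ → ℕ → Prop := fun a b c =>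
  (Cyc a b c ∧ SpecT n (lo3 a b c) (md3 a b c) (hi3 a b c)) ∨
  (Cyc a c b ∧ SpecF n (lo3 a b c) (md3 a b c) (hi3 a b c))

lemma specTF {n p q r : ℕ} (hn : 10 ≤ n) (hT : SpecT n p q r) (hF : SpecF n p q r) : False := by
  unfold SpecT at hT; unfold SpecF at hF
  rcases hT with h|h|h|h|h|h <;> rcases hF with h'|h'|h'|h'|h'|h' <;> omega

lemma holey {n : ℕ} (hn : 10 ≤ n) : IsHoleyOn ↑(Finset.Icc 1 (2*n-3)) (RelB n) := by
  have memS : ∀ v : ℕ, 1 ≤ v → v ≤ 2*n-3 → v ∈ (↑(Finset.Icc 1 (2*n-3)) : Set ℕ) := by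
    intro v h1 h2; simp only [Finset.coe_Icc, Set.mem_Icc]; omega
  refine ⟨?_, ?_, ?_⟩
  · intro a b c h
    have hb : (1 ≤ a ∧ a ≤ 2*n-3) ∧ (1 ≤ b ∧ b ≤ 2*n-3) ∧ (1 ≤ c ∧ c ≤ 2*n-3) ∧
        a ≠ b ∧ b ≠ c ∧ a ≠ c := by
      rcases h with ⟨hcy, hT⟩ | ⟨hcy, hF⟩
      · unfold SpecT lo3 md3 hi3 at hT; unfold Cyc at hcy; omega
      · unfold SpecF lo3 md3 hi3 at hF; unfold Cyc at hcy; omega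
    exact ⟨memS a hb.1.1 hb.1.2, memS b hb.2.1.1 hb.2.1.2, memS c hb.2.2.1.1 hb.2.2.1.2,
      hb.2.2.2.1, hb.2.2.2.2.1, hb.2.2.2.2.2⟩
  · intro a b c h
    rcases h with ⟨hcy, hT⟩ | ⟨hcy, hF⟩
    · exact Or.inl ⟨Cyc_rot hcy,
        by rw [(sort_rot a b c).1, (sort_rot a b c).2.1, (sort_rot a b c).2.2]; exact hT⟩
    · exact Or.inr ⟨Cyc_rot (Cyc_rot hcy),
        by rw [(sort_rot a b c).1, (sort_rot a b c).2.1, (sort_rot a b c).2.2]; exact hF⟩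
  · intro a b c h h'
    have hs := sort_swap a b c
    rcases h with ⟨hcy, hT⟩ | ⟨hcy, hF⟩ <;> rcases h' with ⟨hcy', hT'⟩ | ⟨hcy', hF'⟩
    · unfold Cyc at hcy hcy'; omega
    · rw [hs.1, hs.2.1, hs.2.2] at hF'
      exact specTF hn hT hF'
    · rw [hs.1, hs.2.1, hs.2.2] at hT'
      exact specTF hn hT' hF
    · unfold Cyc at hcy hcy'; omega

lemma no_completion {n : ℕ} (hn : 10 ≤ n) :
    ¬ ∃ R' : ℕ → ℕ → ℕ → Prop, (∀ a b c, RelB n a b c → R' a b c) ∧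
      IsHyper3On ↑(Finset.Icc 1 (2*n-3)) R' ∧ H4FreeOn R' := by
  rintro ⟨R', hext, h3, hfree⟩
  have memS : ∀ v : ℕ, 1 ≤ v → v ≤ 2*n-3 → v ∈ (↑(Finset.Icc 1 (2*n-3)) : Set ℕ) := by
    intro v h1 h2; simp only [Finset.coe_Icc, Set.mem_Icc]; omega
  have hT : ∀ p q r : ℕ, SpecT n p q r → R' p q r := by
    intro p q r h
    have hb : 1 ≤ p ∧ p < q ∧ q < r ∧ r ≤ 2*n-3 := by unfold SpecT at h; omega
    have e : lo3 p q r = p ∧ md3 p q r = q ∧ hi3 p q r = r := by unfold lo3 md3 hi3; omega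
    exact hext _ _ _ (Or.inl ⟨Or.inl ⟨hb.2.1, hb.2.2.1⟩, by rw [e.1, e.2.1, e.2.2]; exact h⟩)
  have hF : ∀ p q r : ℕ, SpecF n p q r → ¬ R' p q r := by
    intro p q r h
    have hb : 1 ≤ p ∧ p < q ∧ q < r ∧ r ≤ 2*n-3 := by unfold SpecF at h; omega
    have e : lo3 p r q = p ∧ md3 p r q = q ∧ hi3 p r q = r := by unfold lo3 md3 hi3; omega
    have hrq : R' p r q := hext _ _ _ (Or.inr ⟨Or.inl ⟨hb.2.1, hb.2.2.1⟩,
      by rw [e.1, e.2.1, e.2.2]; exact h⟩)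
    intro hpqr
    exact (h3.2.2 p q r (memS p (by omega) (by omega)) (memS q (by omega) (by omega))
      (memS r (by omega) (by omega)) (by omega) (by omega) (by omega)).mp hpqr hrq
  have quad : ∀ p q r s : ℕ, 1 ≤ p → p < q → q < r → r < s → s ≤ 2*n-3 →
      ¬((R' p q r ↔ ¬ R' p q s) ∧ (R' p q s ↔ ¬ R' p r s) ∧ (R' p r s ↔ ¬ R' q r s)) := by
    intro p q r s h1 h2 h3' h4 h5
    exact quad_not_alt h3 hfree (memS p (by omega) (by omega)) (memS q (by omega) (by omega))
      (memS r (by omega) (by omega)) (memS s (by omega) (by omega)) h2 h3' h4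
  have chainC : ∀ k i : ℕ, i + k = n - 2 → 1 ≤ i → R' i (i+1) (i+2) := by
    intro k
    induction k with
    | zero =>
      intro i he h1
      exact hT _ _ _ (Or.inr (Or.inl (by omega)))
    | succ k ih =>
      intro i he h1
      have IH : R' (i+1) (i+2) (i+3) := ih (i+1) (by omega) (by omega)
      have A : R' i (i+1) (i+3) := hT _ _ _ (Or.inl (by omega))
      have B : ¬ R' i (i+2) (i+3) := hF _ _ _ (Or.inl (by omega))
      by_contra hnot
      exact quad i (i+1) (i+2) (i+3) (by omega) (by omega) (by omega) (by omega) (by omega)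
        ⟨iff_of_false hnot (not_not_intro A), iff_of_true A B, iff_of_false B (not_not_intro IH)⟩
  have R123 : R' 1 2 3 := chainC (n-3) 1 (by omega) (by omega)
  have chainD : ∀ k a : ℕ, a + k + 5 = 2*n → n+1 ≤ a → ¬ R' a (a+1) (a+2) := by
    intro k
    induction k with
    | zero =>
      intro a he h1
      exact hF _ _ _ (Or.inr (Or.inr (Or.inr (Or.inr (Or.inr (by omega))))))
    | succ k ih =>
      intro a he h1
      have IH : ¬ R' (a+1) (a+2) (a+3) := ih (a+1) (by omega) (by omega)
      have B : ¬ R' a (a+1) (a+3) := hF _ _ _ (Or.inr (Or.inr (Or.inr (Or.inr (Or.inl (by omega))))))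
      have A : R' a (a+2) (a+3) := hT _ _ _ (Or.inr (Or.inr (Or.inr (Or.inr (Or.inr (by omega))))))
      intro hcon
      exact quad a (a+1) (a+2) (a+3) (by omega) (by omega) (by omega) (by omega) (by omega)
        ⟨iff_of_true hcon B, iff_of_false B (not_not_intro A), iff_of_true A IH⟩
  have hD4 : ¬ R' (n+1) (n+2) (n+3) := chainD (n-6) (n+1) (by omega) (by omega)
  have j3 : ¬ R' 3 (n+1) (n+2) := by
    have B : ¬ R' 3 (n+1) (n+3) := hF _ _ _ (Or.inr (Or.inr (Or.inr (Or.inl (by omega)))))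
    have A : R' 3 (n+2) (n+3) := hT _ _ _ (Or.inr (Or.inr (Or.inr (Or.inr (Or.inl (by omega))))))
    intro hcon
    exact quad 3 (n+1) (n+2) (n+3) (by omega) (by omega) (by omega) (by omega) (by omega)
      ⟨iff_of_true hcon B, iff_of_false B (not_not_intro A), iff_of_true A hD4⟩
  have j2 : ¬ R' 2 3 (n+1) := by
    have B : ¬ R' 2 3 (n+2) := hF _ _ _ (Or.inr (Or.inr (Or.inl (by omega))))
    have A : R' 2 (n+1) (n+2) := hT _ _ _ (Or.inr (Or.inr (Or.inr (Or.inl (by omega)))))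
    intro hcon
    exact quad 2 3 (n+1) (n+2) (by omega) (by omega) (by omega) (by omega) (by omega)
      ⟨iff_of_true hcon B, iff_of_false B (not_not_intro A), iff_of_true A j3⟩
  have j1 : ¬ R' 1 2 3 := by
    have B : ¬ R' 1 2 (n+1) := hF _ _ _ (Or.inr (Or.inl (by omega)))
    have A : R' 1 3 (n+1) := hT _ _ _ (Or.inr (Or.inr (Or.inl (by omega))))
    intro hcon
    exact quad 1 2 3 (n+1) (by omega) (by omega) (by omega) (by omega) (by omega)
      ⟨iff_of_true hcon B, iff_of_false B (not_not_intro A), iff_of_true A j2⟩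
  exact j1 R123

/-! ### The completion used after deleting a vertex x -/

/-- Sign function completing Bₙ minus the vertex x (on sorted triples). -/
def Gx (n x p q r : ℕ) : Prop :=
  (r ≤ n ∧ q = p+1 ∧ r = p+3) ∨
  (r ≤ n ∧ q = p+1 ∧ r ≠ p+3 ∧ (n+1 ≤ x ∨ x+1 ≤ p)) ∨
  (r ≤ n ∧ q ≠ p+1 ∧ q = p+2 ∧ p = x) ∨
  (r ≤ n ∧ q ≠ p+1 ∧ q ≠ p+2 ∧ (n+1 ≤ x ∨ x+1 ≤ p)) ∨
  (n < r ∧ ((p ≤ 3 ∨ n+1 ≤ p) ∧ (q ≤ 3 ∨ n+1 ≤ q)) ∧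
    ((p ≤ 2 ∧ q = p+1) ∨ (p = 3 ∧ q = n+1) ∨ (n+1 ≤ p ∧ q = p+1)) ∧
    ¬((p = 1 ∧ r = n+1) ∨ (p = 2 ∧ r = n+2) ∨ (p = 3 ∧ r = n+3) ∨ (n+1 ≤ p ∧ r = p+3)) ∧
    (n+1 ≤ x ∧ p ≤ x)) ∨
  (n < r ∧ ((p ≤ 3 ∨ n+1 ≤ p) ∧ (q ≤ 3 ∨ n+1 ≤ q)) ∧
    ¬((p ≤ 2 ∧ q = p+1) ∨ (p = 3 ∧ q = n+1) ∨ (n+1 ≤ p ∧ q = p+1)) ∧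
    ((p = 1 ∧ q = 3) ∨ (p = 2 ∧ q = n+1) ∨ (p = 3 ∧ q = n+2) ∨ (n+1 ≤ p ∧ q = p+2)) ∧ p ≠ x) ∨
  (n < r ∧ ((p ≤ 3 ∨ n+1 ≤ p) ∧ (q ≤ 3 ∨ n+1 ≤ q)) ∧
    ¬((p ≤ 2 ∧ q = p+1) ∨ (p = 3 ∧ q = n+1) ∨ (n+1 ≤ p ∧ q = p+1)) ∧
    ¬((p = 1 ∧ q = 3) ∨ (p = 2 ∧ q = n+1) ∨ (p = 3 ∧ q = n+2) ∨ (n+1 ≤ p ∧ q = p+2)) ∧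
    (n+1 ≤ x ∧ p ≤ x)) ∨
  (n < r ∧ ¬((p ≤ 3 ∨ n+1 ≤ p) ∧ (q ≤ 3 ∨ n+1 ≤ q)))

lemma E1 (n x p q r : ℕ) (h1 : r ≤ n) (h2 : q = p+1) (h3 : r = p+3) : Gx n x p q r :=
  Or.inl ⟨h1, h2, h3⟩

lemma E2 (n x p q r : ℕ) (h1 : r ≤ n) (h2 : q = p+1) (h3 : r ≠ p+3) :
    Gx n x p q r ↔ (n+1 ≤ x ∨ x+1 ≤ p) := by
  constructor
  · rintro (h|h|h|h|h|h|h|h)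
    · exact absurd h.2.2 h3
    · exact h.2.2.2
    · exact absurd h2 h.2.1
    · exact absurd h2 h.2.1
    · exact absurd h1 (by omega)
    · exact absurd h1 (by omega)
    · exact absurd h1 (by omega)
    · exact absurd h1 (by omega)
  · intro h; exact Or.inr (Or.inl ⟨h1, h2, h3, h⟩)

lemma E3 (n x p q r : ℕ) (h1 : r ≤ n) (h2 : q ≠ p+1) (h3 : q = p+2) :
    Gx n x p q r ↔ p = x := by
  constructor
  · rintro (h|h|h|h|h|h|h|h)
    · exact absurd h.2.1 h2
    · exact absurd h.2.1 h2
    · exact h.2.2.2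
    · exact absurd h3 h.2.2.1
    · exact absurd h1 (by omega)
    · exact absurd h1 (by omega)
    · exact absurd h1 (by omega)
    · exact absurd h1 (by omega)
  · intro h; exact Or.inr (Or.inr (Or.inl ⟨h1, h2, h3, h⟩))

lemma E4 (n x p q r : ℕ) (h1 : r ≤ n) (h2 : q ≠ p+1) (h3 : q ≠ p+2) :
    Gx n x p q r ↔ (n+1 ≤ x ∨ x+1 ≤ p) := by
  constructor
  · rintro (h|h|h|h|h|h|h|h)
    · exact absurd h.2.1 h2
    · exact absurd h.2.1 h2
    · exact absurd h.2.2.1 h3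
    · exact h.2.2.2
    · exact absurd h1 (by omega)
    · exact absurd h1 (by omega)
    · exact absurd h1 (by omega)
    · exact absurd h1 (by omega)
  · intro h; exact Or.inr (Or.inr (Or.inr (Or.inl ⟨h1, h2, h3, h⟩)))

lemma E5 (n x p q r : ℕ) (h1 : n < r)
    (h2 : ¬((p ≤ 3 ∨ n+1 ≤ p) ∧ (q ≤ 3 ∨ n+1 ≤ q))) : Gx n x p q r :=
  Or.inr (Or.inr (Or.inr (Or.inr (Or.inr (Or.inr (Or.inr ⟨h1, h2⟩))))))

lemma E6 (n x p q r : ℕ) (h1 : n < r) (hW : (p ≤ 3 ∨ n+1 ≤ p) ∧ (q ≤ 3 ∨ n+1 ≤ q))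
    (hs1 : (p ≤ 2 ∧ q = p+1) ∨ (p = 3 ∧ q = n+1) ∨ (n+1 ≤ p ∧ q = p+1))
    (hs3 : ¬((p = 1 ∧ r = n+1) ∨ (p = 2 ∧ r = n+2) ∨ (p = 3 ∧ r = n+3) ∨ (n+1 ≤ p ∧ r = p+3))) :
    Gx n x p q r ↔ (n+1 ≤ x ∧ p ≤ x) := by
  constructor
  · rintro (h|h|h|h|h|h|h|h)
    · exact absurd h.1 (by omega)
    · exact absurd h.1 (by omega)
    · exact absurd h.1 (by omega)
    · exact absurd h.1 (by omega)
    · exact h.2.2.2.2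
    · exact absurd hs1 h.2.2.1
    · exact absurd hs1 h.2.2.1
    · exact absurd hW h.2
  · intro h; exact Or.inr (Or.inr (Or.inr (Or.inr (Or.inl ⟨h1, hW, hs1, hs3, h⟩))))

lemma E7 (n x p q r : ℕ) (h1 : n < r) (hW : (p ≤ 3 ∨ n+1 ≤ p) ∧ (q ≤ 3 ∨ n+1 ≤ q))
    (hs1 : (p ≤ 2 ∧ q = p+1) ∨ (p = 3 ∧ q = n+1) ∨ (n+1 ≤ p ∧ q = p+1))
    (hs3 : (p = 1 ∧ r = n+1) ∨ (p = 2 ∧ r = n+2) ∨ (p = 3 ∧ r = n+3) ∨ (n+1 ≤ p ∧ r = p+3)) :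
    ¬ Gx n x p q r := by
  rintro (h|h|h|h|h|h|h|h)
  · exact absurd h.1 (by omega)
  · exact absurd h.1 (by omega)
  · exact absurd h.1 (by omega)
  · exact absurd h.1 (by omega)
  · exact h.2.2.2.1 hs3
  · exact h.2.2.1 hs1
  · exact h.2.2.1 hs1
  · exact h.2 hW

lemma E8 (n x p q r : ℕ) (h1 : n < r) (hW : (p ≤ 3 ∨ n+1 ≤ p) ∧ (q ≤ 3 ∨ n+1 ≤ q))
    (hns1 : ¬((p ≤ 2 ∧ q = p+1) ∨ (p = 3 ∧ q = n+1) ∨ (n+1 ≤ p ∧ q = p+1)))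
    (hs2 : (p = 1 ∧ q = 3) ∨ (p = 2 ∧ q = n+1) ∨ (p = 3 ∧ q = n+2) ∨ (n+1 ≤ p ∧ q = p+2)) :
    Gx n x p q r ↔ p ≠ x := by
  constructor
  · rintro (h|h|h|h|h|h|h|h)
    · exact absurd h.1 (by omega)
    · exact absurd h.1 (by omega)
    · exact absurd h.1 (by omega)
    · exact absurd h.1 (by omega)
    · exact absurd h.2.2.1 hns1
    · exact h.2.2.2.2
    · exact absurd hs2 h.2.2.2.1
    · exact absurd hW h.2
  · intro h; exact Or.inr (Or.inr (Or.inr (Or.inr (Or.inr (Or.inl ⟨h1, hW, hns1, hs2, h⟩)))))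

lemma E9 (n x p q r : ℕ) (h1 : n < r) (hW : (p ≤ 3 ∨ n+1 ≤ p) ∧ (q ≤ 3 ∨ n+1 ≤ q))
    (hns1 : ¬((p ≤ 2 ∧ q = p+1) ∨ (p = 3 ∧ q = n+1) ∨ (n+1 ≤ p ∧ q = p+1)))
    (hns2 : ¬((p = 1 ∧ q = 3) ∨ (p = 2 ∧ q = n+1) ∨ (p = 3 ∧ q = n+2) ∨ (n+1 ≤ p ∧ q = p+2))) :
    Gx n x p q r ↔ (n+1 ≤ x ∧ p ≤ x) := by
  constructor
  · rintro (h|h|h|h|h|h|h|h)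
    · exact absurd h.1 (by omega)
    · exact absurd h.1 (by omega)
    · exact absurd h.1 (by omega)
    · exact absurd h.1 (by omega)
    · exact absurd h.2.2.1 hns1
    · exact absurd h.2.2.2.1 hns2
    · exact h.2.2.2.2
    · exact absurd hW h.2
  · intro h; exact Or.inr (Or.inr (Or.inr (Or.inr (Or.inr (Or.inr (Or.inl ⟨h1, hW, hns1, hns2, h⟩))))))

set_option maxHeartbeats 3000000 in
lemma Gx_altFree {n x : ℕ} (hn : 10 ≤ n) (hx1 : 1 ≤ x) (hx2 : x ≤ 2*n-3) (p q r s : ℕ)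
    (hp : 1 ≤ p) (hs2 : s ≤ 2*n-3) (o1 : p < q) (o2 : q < r) (o3 : r < s) :
    ¬((Gx n x p q r ↔ ¬ Gx n x p q s) ∧ (Gx n x p q s ↔ ¬ Gx n x p r s) ∧
      (Gx n x p r s ↔ ¬ Gx n x q r s)) := by
  rintro ⟨c1, c2, c3⟩
  by_cases hsn : s ≤ n
  · by_cases hq : q = p+1
    · by_cases hr : r = p+2
      · by_cases hs3 : s = p+3
        · have g1 := E2 n x p q r (by omega) hq (by omega)
          have g2 : Gx n x p q s := E1 n x p q s (by omega) hq hs3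
          have g3 := E3 n x p r s (by omega) (by omega) (by omega)
          have g4 := E2 n x q r s (by omega) (by omega) (by omega)
          have k1 : ¬(n+1 ≤ x ∨ x+1 ≤ p) := fun h => (c1.mp (g1.mpr h)) g2
          have k2 : ¬ p = x := fun he => (c2.mp g2) (g3.mpr he)
          have k3 : Gx n x q r s := by by_contra hh; exact (c2.mp g2) (c3.mpr hh)
          have k4 := g4.mp k3
          omega
        · exact iff_not_contra c1 ((E2 n x p q r (by omega) hq (by omega)).trans
            (E2 n x p q s (by omega) hq (by omega)).symm)
      · by_cases hr3 : r = p+3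
        · exact iff_not_contra c2 ((E2 n x p q s (by omega) hq (by omega)).trans
            (E4 n x p r s (by omega) (by omega) (by omega)).symm)
        · exact iff_not_contra c1 ((E2 n x p q r (by omega) hq (by omega)).trans
            (E2 n x p q s (by omega) hq (by omega)).symm)
    · by_cases hq2 : q = p+2
      · exact iff_not_contra c1 ((E3 n x p q r (by omega) hq hq2).trans
          (E3 n x p q s (by omega) hq hq2).symm)
      · exact iff_not_contra c1 ((E4 n x p q r (by omega) hq hq2).trans
          (E4 n x p q s (by omega) hq hq2).symm)
  · by_cases hpA : 4 ≤ p ∧ p ≤ n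
    · exact iff_not_contra c2 (iff_of_true (E5 n x p q s (by omega) (by omega))
        (E5 n x p r s (by omega) (by omega)))
    · by_cases hqA : 4 ≤ q ∧ q ≤ n
      · by_cases hrn : r ≤ n
        · exact iff_not_contra c2 (iff_of_true (E5 n x p q s (by omega) (by omega))
            (E5 n x p r s (by omega) (by omega)))
        · exact iff_not_contra c1 (iff_of_true (E5 n x p q r (by omega) (by omega))
            (E5 n x p q s (by omega) (by omega)))
      · by_cases hrA : 4 ≤ r ∧ r ≤ n
        · exact iff_not_contra c3 (iff_of_true (E5 n x p r s (by omega) (by omega))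
            (E5 n x q r s (by omega) (by omega)))
        · have wp : p ≤ 3 ∨ n+1 ≤ p := by omega
          have wq : q ≤ 3 ∨ n+1 ≤ q := by omega
          have wr : r ≤ 3 ∨ n+1 ≤ r := by omega
          by_cases h1 : (p ≤ 2 ∧ q = p+1) ∨ (p = 3 ∧ q = n+1) ∨ (n+1 ≤ p ∧ q = p+1)
          · by_cases h2 : (q ≤ 2 ∧ r = q+1) ∨ (q = 3 ∧ r = n+1) ∨ (n+1 ≤ q ∧ r = q+1)
            · by_cases hrn : r ≤ n
              · by_cases h3 : s = n+1
                · have g1 := E2 n x p q r (by omega) (by omega) (by omega)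
                  have g2 : ¬ Gx n x p q s :=
                    E7 n x p q s (by omega) (by omega) (by omega) (by omega)
                  have g3 := E8 n x p r s (by omega) (by omega) (by omega) (by omega)
                  have g4 := E6 n x q r s (by omega) (by omega) (by omega) (by omega)
                  have k1 := g1.mp (c1.mpr g2)
                  have k2 : Gx n x p r s := by by_contra hh; exact g2 (c2.mpr hh)
                  have k3 := g3.mp k2
                  have k4 : ¬(n+1 ≤ x ∧ q ≤ x) := fun h => (c3.mp k2) (g4.mpr h)
                  omega
                · have g1 := E2 n x p q r (by omega) (by omega) (by omega)
                  have g2 := E6 n x p q s (by omega) (by omega) (by omega) (by omega)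
                  have e : (n+1 ≤ x ∨ x+1 ≤ p) ↔ (n+1 ≤ x ∧ p ≤ x) := by omega
                  exact iff_not_contra c1 ((g1.trans e).trans g2.symm)
              · by_cases h3 : (r ≤ 2 ∧ s = r+1) ∨ (r = 3 ∧ s = n+1) ∨ (n+1 ≤ r ∧ s = r+1)
                · have g1 := E6 n x p q r (by omega) (by omega) h1 (by omega)
                  have g2 : ¬ Gx n x p q s :=
                    E7 n x p q s (by omega) (by omega) h1 (by omega)
                  have g3 := E8 n x p r s (by omega) (by omega) (by omega) (by omega)
                  have g4 := E6 n x q r s (by omega) (by omega) h2 (by omega)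
                  have k1 := g1.mp (c1.mpr g2)
                  have k2 : Gx n x p r s := by by_contra hh; exact g2 (c2.mpr hh)
                  have k3 := g3.mp k2
                  have k4 : ¬(n+1 ≤ x ∧ q ≤ x) := fun h => (c3.mp k2) (g4.mpr h)
                  omega
                · have g1 := E6 n x p q r (by omega) (by omega) h1 (by omega)
                  have g2 := E6 n x p q s (by omega) (by omega) h1 (by omega)
                  exact iff_not_contra c1 (g1.trans g2.symm)
            · by_cases h3 : (p = 1 ∧ r = n+1) ∨ (p = 2 ∧ r = n+2) ∨ (p = 3 ∧ r = n+3) ∨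
                  (n+1 ≤ p ∧ r = p+3)
              · have g2 := E6 n x p q s (by omega) (by omega) h1 (by omega)
                have g3 := E9 n x p r s (by omega) (by omega) (by omega) (by omega)
                exact iff_not_contra c2 (g2.trans g3.symm)
              · have g1 := E6 n x p q r (by omega) (by omega) h1 h3
                have g2 := E6 n x p q s (by omega) (by omega) h1 (by omega)
                exact iff_not_contra c1 (g1.trans g2.symm)
          · have hnr : n < r := by omega
            by_cases h2 : (p = 1 ∧ q = 3) ∨ (p = 2 ∧ q = n+1) ∨ (p = 3 ∧ q = n+2) ∨
                (n+1 ≤ p ∧ q = p+2)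
            · exact iff_not_contra c1 ((E8 n x p q r hnr (by omega) h1 h2).trans
                (E8 n x p q s (by omega) (by omega) h1 h2).symm)
            · exact iff_not_contra c1 ((E9 n x p q r hnr (by omega) h1 h2).trans
                (E9 n x p q s (by omega) (by omega) h1 h2).symm)

lemma Gx_specT {n x : ℕ} (hn : 10 ≤ n) (hx1 : 1 ≤ x) (hx2 : x ≤ 2*n-3) {p q r : ℕ}
    (hpx : p ≠ x) (hqx : q ≠ x) (hrx : r ≠ x) (hT : SpecT n p q r) : Gx n x p q r := by
  unfold SpecT at hT
  rcases hT with h|h|h|h|h|h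
  · exact Or.inl ⟨by omega, by omega, by omega⟩
  · exact Or.inr (Or.inl ⟨by omega, by omega, by omega, by omega⟩)
  · exact Or.inr (Or.inr (Or.inr (Or.inr (Or.inr (Or.inl
      ⟨by omega, by omega, by omega, by omega, by omega⟩)))))
  · exact Or.inr (Or.inr (Or.inr (Or.inr (Or.inr (Or.inl
      ⟨by omega, by omega, by omega, by omega, by omega⟩)))))
  · exact Or.inr (Or.inr (Or.inr (Or.inr (Or.inr (Or.inl
      ⟨by omega, by omega, by omega, by omega, by omega⟩)))))
  · exact Or.inr (Or.inr (Or.inr (Or.inr (Or.inr (Or.inl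
      ⟨by omega, by omega, by omega, by omega, by omega⟩)))))

set_option maxHeartbeats 1600000 in
lemma Gx_specF {n x : ℕ} (hn : 10 ≤ n) (hx1 : 1 ≤ x) (hx2 : x ≤ 2*n-3) {p q r : ℕ}
    (hpx : p ≠ x) (hqx : q ≠ x) (hrx : r ≠ x) (hF : SpecF n p q r) : ¬ Gx n x p q r := by
  intro hG
  unfold SpecF at hF
  unfold Gx at hG
  rcases hF with h|h|h|h|h|h <;> rcases hG with g|g|g|g|g|g|g|g <;> omega

/-! ### Main theorem -/

set_option maxHeartbeats 1600000 in
/-- there are arbitrarily large holey 3-hypertournaments with no H₄-free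
completion all of whose proper induced substructures have H₄-free completions. -/
theorem stmt17 : ∀ N : ℕ, ∃ (S : Finset ℕ) (R : ℕ → ℕ → ℕ → Prop),
    N ≤ S.card ∧ IsHoleyOn ↑S R ∧
    (¬ ∃ R' : ℕ → ℕ → ℕ → Prop,
      (∀ a b c, R a b c → R' a b c) ∧ IsHyper3On ↑S R' ∧ H4FreeOn R') ∧
    (∀ S' : Finset ℕ, S' ⊂ S →
      ∃ R' : ℕ → ℕ → ℕ → Prop,
        (∀ a b c, a ∈ S' → b ∈ S' → c ∈ S' → R a b c → R' a b c) ∧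
        IsHyper3On ↑S' R' ∧ H4FreeOn R') := by
  intro N
  have hn : 10 ≤ N + 10 := by omega
  refine ⟨Finset.Icc 1 (2*(N+10)-3), RelB (N+10), ?_, holey hn, no_completion hn, ?_⟩
  · rw [Nat.card_Icc]; omega
  · intro S' hss
    obtain ⟨x, hxS, hxS'⟩ := Finset.exists_of_ssubset hss
    have hx : 1 ≤ x ∧ x ≤ 2*(N+10)-3 := Finset.mem_Icc.mp hxS
    refine ⟨mkRel ↑S' (Gx (N+10) x), ?_, mkRel_hyper _ _, H4Free_of_altFree _ _ ?_⟩
    · intro a b c ha hb hc hR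
      have hax : a ≠ x := fun he => hxS' (he ▸ ha)
      have hbx : b ≠ x := fun he => hxS' (he ▸ hb)
      have hcx : c ≠ x := fun he => hxS' (he ▸ hc)
      have hlo : lo3 a b c = a ∨ lo3 a b c = b ∨ lo3 a b c = c := by unfold lo3; omega
      have hmd : md3 a b c = a ∨ md3 a b c = b ∨ md3 a b c = c := by unfold md3; omega
      have hhi : hi3 a b c = a ∨ hi3 a b c = b ∨ hi3 a b c = c := by unfold hi3; omega
      have hlox : lo3 a b c ≠ x := by rcases hlo with h|h|h <;> rw [h] <;> assumption
      have hmdx : md3 a b c ≠ x := by rcases hmd with h|h|h <;> rw [h] <;> assumption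
      have hhix : hi3 a b c ≠ x := by rcases hhi with h|h|h <;> rw [h] <;> assumption
      rcases hR with ⟨hcy, hT⟩ | ⟨hcy, hFs⟩
      · have hd : a ≠ b ∧ b ≠ c ∧ a ≠ c := by unfold Cyc at hcy; omega
        exact ⟨Finset.mem_coe.mpr ha, Finset.mem_coe.mpr hb, Finset.mem_coe.mpr hc,
          hd.1, hd.2.1, hd.2.2,
          iff_of_true hcy (Gx_specT hn hx.1 hx.2 hlox hmdx hhix hT)⟩
      · have hd : a ≠ b ∧ b ≠ c ∧ a ≠ c := by unfold Cyc at hcy; omega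
        exact ⟨Finset.mem_coe.mpr ha, Finset.mem_coe.mpr hb, Finset.mem_coe.mpr hc,
          hd.1, hd.2.1, hd.2.2,
          iff_of_false (by unfold Cyc at hcy ⊢; omega)
            (Gx_specF hn hx.1 hx.2 hlox hmdx hhix hFs)⟩
    · intro p q r s hp hq hr hs o1 o2 o3
      have hpI := Finset.mem_Icc.mp (hss.subset (Finset.mem_coe.mp hp))
      have hsI := Finset.mem_Icc.mp (hss.subset (Finset.mem_coe.mp hs))
      exact Gx_altFree hn hx.1 hx.2 p q r s hpI.1 hsI.2 o1 o2 o3
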